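/- arXiv:1601.03594 — 5 statements merged into one kernel-verified Lean document; each statement's English description precedes it below -/
import Mathlib

section
/- Let (X,d) be a metric space, μ a Borel measure on X with μ(B(x,r)) < ∞ for all r > 0, x ∈ X, N > 1 a real number, and κ_∞ > 0. Assume: (i) the function r ↦ s(x,r)/r^{N−1} is non-increasing on (0,∞); (ii) μ(B(x,R)) = ∫₀^R s(x,t) dt for every R > 0; (iii) liminf_{r→∞} μ(B(x,r))/r^N = κ_∞. Then s(x,r) ≥ N κ_∞ r^{N−1} for every r > 0. -/
open MeasureTheory Metric Filter Set
open scoped Topology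

/-- The Minkowski content of the ball `B(x,r)`:
`s(x,r) = limsup_{δ→0⁺} (1/δ) μ(B(x,r+δ) \ B(x,r))`. -/
noncomputable def minkowskiContent {X : Type*} [MetricSpace X] [MeasurableSpace X]
    (μ : Measure X) (x : X) (r : ℝ) : ℝ :=
  limsup (fun δ : ℝ => (μ (ball x (r + δ) \ ball x r)).toReal / δ) (nhdsWithin 0 (Ioi 0))

lemma mink_nonneg {X : Type*} [MetricSpace X] [MeasurableSpace X]
    (μ : Measure X) (x : X) (r : ℝ) : 0 ≤ minkowskiContent μ x r := by
  rw [minkowskiContent, limsup, limsSup]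
  apply Real.sInf_nonneg
  intro a ha
  simp only [mem_setOf_eq, eventually_map] at ha
  obtain ⟨δ, hδa, hδ⟩ := (ha.and self_mem_nhdsWithin).exists
  exact le_trans (div_nonneg ENNReal.toReal_nonneg (le_of_lt hδ)) hδa

lemma mink_integrableOn {X : Type*} [MetricSpace X] [MeasurableSpace X]
    (μ : Measure X) (x : X) {N : ℝ} (hN : 1 < N)
    (hanti : AntitoneOn (fun r : ℝ => minkowskiContent μ x r / r ^ (N - 1)) (Ioi 0))
    {a b : ℝ} (ha : 0 < a) (hab : a ≤ b) :
    IntervalIntegrable (minkowskiContent μ x) volume a b := by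
  set s := minkowskiContent μ x with hs
  set h : ℝ → ℝ := fun t => s t / t ^ (N - 1) with hh
  have hnn : ∀ t, 0 ≤ s t := fun t => mink_nonneg μ x t
  rw [intervalIntegrable_iff_integrableOn_Ioc_of_le hab]
  have hsub : Ioc a b ⊆ Ioi (0:ℝ) := fun t ht => lt_trans ha ht.1
  have hmeas : AEMeasurable h (volume.restrict (Ioc a b)) :=
    aemeasurable_restrict_of_antitoneOn measurableSet_Ioc (hanti.mono hsub)
  have hpow : AEMeasurable (fun t : ℝ => t ^ (N - 1)) (volume.restrict (Ioc a b)) :=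
    (Real.continuous_rpow_const (by linarith)).measurable.aemeasurable
  have heq : ∀ᵐ t ∂(volume.restrict (Ioc a b)), h t * t ^ (N - 1) = s t := by
    filter_upwards [ae_restrict_mem measurableSet_Ioc] with t ht
    exact div_mul_cancel₀ _ (Real.rpow_pos_of_pos (lt_trans ha ht.1) _).ne'
  have hmeas2 : AEMeasurable s (volume.restrict (Ioc a b)) :=
    (hmeas.mul hpow).congr heq
  refine ⟨hmeas2.aestronglyMeasurable, ?_⟩
  apply HasFiniteIntegral.restrict_of_bounded (C := h a * b ^ (N - 1))
    measure_Ioc_lt_top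
  filter_upwards [ae_restrict_mem measurableSet_Ioc] with t ht
  have ht0 : 0 < t := lt_trans ha ht.1
  have htp : (0:ℝ) < t ^ (N - 1) := Real.rpow_pos_of_pos ht0 _
  rw [Real.norm_eq_abs, abs_of_nonneg (hnn t)]
  have h1 : h t ≤ h a := hanti (mem_Ioi.mpr ha) (mem_Ioi.mpr ht0) ht.1.le
  have h2 : t ^ (N - 1) ≤ b ^ (N - 1) := Real.rpow_le_rpow ht0.le ht.2 (by linarith)
  have h3 : 0 ≤ h t := div_nonneg (hnn t) htp.le
  calc s t = h t * t ^ (N - 1) := by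
        rw [hh]
        exact (div_mul_cancel₀ _ htp.ne').symm
    _ ≤ h a * b ^ (N - 1) := mul_le_mul h1 h2 htp.le (le_trans h3 h1)

theorem stmt_1 {X : Type*} [MetricSpace X] [MeasurableSpace X] [BorelSpace X]
    (μ : Measure X) (x : X) (N : ℝ) (hN : 1 < N) (kinf : ℝ) (hkinf : 0 < kinf)
    (hfin : ∀ (z : X) (r : ℝ), 0 < r → μ (ball z r) < ⊤)
    (hanti : AntitoneOn (fun r : ℝ => minkowskiContent μ x r / r ^ (N - 1)) (Ioi 0))
    (hvol : ∀ R : ℝ, 0 < R →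
      (μ (ball x R)).toReal = ∫ t in (0:ℝ)..R, minkowskiContent μ x t)
    (hlim : liminf (fun r : ℝ => (μ (ball x r)).toReal / r ^ N) atTop = kinf) :
    ∀ r : ℝ, 0 < r → N * kinf * r ^ (N - 1) ≤ minkowskiContent μ x r := by
  intro r hr
  set s := minkowskiContent μ x with hs
  have hN0 : (0:ℝ) < N := lt_trans one_pos hN
  have hrN1 : (0:ℝ) < r ^ (N - 1) := Real.rpow_pos_of_pos hr _
  set c : ℝ := s r / r ^ (N - 1) with hc
  suffices hkc : kinf ≤ c / N by
    have h1 : N * kinf ≤ c := by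
      rw [le_div_iff₀ hN0] at hkc
      linarith
    calc N * kinf * r ^ (N - 1) ≤ c * r ^ (N - 1) := by nlinarith
      _ = s r := div_mul_cancel₀ _ hrN1.ne'
  by_cases hint : IntervalIntegrable s volume 0 r
  · -- good case
    have hc0 : 0 ≤ c := div_nonneg (mink_nonneg μ x r) hrN1.le
    have key : ∀ R, r ≤ R →
        (μ (ball x R)).toReal ≤ (μ (ball x r)).toReal + c * (R ^ N - r ^ N) / N := by
      intro R hR
      have hR0 : 0 < R := lt_of_lt_of_le hr hR
      have hIrR : IntervalIntegrable s volume r R := mink_integrableOn μ x hN hanti hr hR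
      have hsplit : (∫ t in (0:ℝ)..r, s t) + ∫ t in r..R, s t = ∫ t in (0:ℝ)..R, s t :=
        intervalIntegral.integral_add_adjacent_intervals hint hIrR
      have hpoly : IntervalIntegrable (fun t : ℝ => c * t ^ (N - 1)) volume r R := by
        apply ContinuousOn.intervalIntegrable
        apply ContinuousOn.mul continuousOn_const
        intro t ht
        rw [uIcc_of_le hR, mem_Icc] at ht
        have ht0 : t ≠ 0 := (lt_of_lt_of_le hr ht.1).ne'
        exact (Real.continuousAt_rpow_const t _ (Or.inl ht0)).continuousWithinAt
      have hmono : ∫ t in r..R, s t ≤ ∫ t in r..R, c * t ^ (N - 1) := by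
        apply intervalIntegral.integral_mono_on hR hIrR hpoly
        intro t ht
        have ht0 : 0 < t := lt_of_lt_of_le hr ht.1
        have htp : (0:ℝ) < t ^ (N - 1) := Real.rpow_pos_of_pos ht0 _
        have h1 : s t / t ^ (N - 1) ≤ c := hanti (mem_Ioi.mpr hr) (mem_Ioi.mpr ht0) ht.1
        calc s t = s t / t ^ (N - 1) * t ^ (N - 1) := (div_mul_cancel₀ _ htp.ne').symm
          _ ≤ c * t ^ (N - 1) := mul_le_mul_of_nonneg_right h1 htp.le
      have hval : ∫ t in r..R, c * t ^ (N - 1) = c * (R ^ N - r ^ N) / N := by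
        rw [intervalIntegral.integral_const_mul,
          integral_rpow (Or.inl (by linarith : (-1:ℝ) < N - 1))]
        have : N - 1 + 1 = N := by ring
        rw [this]
        ring
      rw [hvol R hR0, ← hsplit, ← hvol r hr]
      linarith [hval ▸ hmono]
    set M := (μ (ball x r)).toReal with hM
    have htend : Tendsto (fun R : ℝ => M / R ^ N + (c / N - c * r ^ N / N / R ^ N))
        atTop (𝓝 (c / N)) := by
      have hRN : Tendsto (fun R : ℝ => R ^ N) atTop atTop := tendsto_rpow_atTop hN0
      have h1 : Tendsto (fun R : ℝ => M / R ^ N) atTop (𝓝 0) :=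
        Tendsto.div_atTop tendsto_const_nhds hRN
      have h2 : Tendsto (fun R : ℝ => c * r ^ N / N / R ^ N) atTop (𝓝 0) :=
        Tendsto.div_atTop tendsto_const_nhds hRN
      have h3 : Tendsto (fun R : ℝ => M / R ^ N + (c / N - c * r ^ N / N / R ^ N)) atTop
          (𝓝 (0 + (c / N - 0))) :=
        h1.add ((tendsto_const_nhds : Tendsto (fun _ : ℝ => c / N) atTop (𝓝 (c / N))).sub h2)
      simpa using h3
    have hbdd : IsBoundedUnder (· ≥ ·) atTop (fun R : ℝ => (μ (ball x R)).toReal / R ^ N) := by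
      refine ⟨0, ?_⟩
      simp only [eventually_map]
      filter_upwards [eventually_gt_atTop (0:ℝ)] with R hR
      exact div_nonneg ENNReal.toReal_nonneg (Real.rpow_pos_of_pos hR N).le
    by_contra hcon
    push_neg at hcon
    set ε := (kinf - c / N) / 2 with hε
    have hεpos : 0 < ε := by simp only [hε]; linarith
    have hfinal : kinf ≤ c / N + ε := by
      rw [← hlim]
      apply liminf_le_of_frequently_le _ hbdd
      apply Eventually.frequently
      have hev2 : ∀ᶠ R in atTop,
          M / R ^ N + (c / N - c * r ^ N / N / R ^ N) ≤ c / N + ε :=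
        htend.eventually (eventually_le_nhds (by linarith))
      filter_upwards [eventually_ge_atTop (max r 1), hev2] with R hR hR2
      have hRr : r ≤ R := le_trans (le_max_left _ _) hR
      have hR0 : (0:ℝ) < R := lt_of_lt_of_le one_pos (le_trans (le_max_right _ _) hR)
      have hRN0 : R ^ N ≠ 0 := (Real.rpow_pos_of_pos hR0 N).ne'
      have heq : (M + c * (R ^ N - r ^ N) / N) / R ^ N
          = M / R ^ N + (c / N - c * r ^ N / N / R ^ N) := by
        field_simp
      calc (μ (ball x R)).toReal / R ^ N
          ≤ (M + c * (R ^ N - r ^ N) / N) / R ^ N := by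
            gcongr
            exact key R hRr
        _ = M / R ^ N + (c / N - c * r ^ N / N / R ^ N) := heq
        _ ≤ c / N + ε := hR2
    simp only [hε] at hfinal
    linarith
  · -- bad case: s not integrable near 0, so all volumes are 0, contradicting kinf > 0
    exfalso
    have hzero : ∀ R, r ≤ R → (μ (ball x R)).toReal = 0 := by
      intro R hR
      have hR0 : 0 < R := lt_of_lt_of_le hr hR
      have hnI : ¬ IntervalIntegrable s volume 0 R := by
        intro hI
        apply hint
        apply hI.mono_set
        rw [uIcc_of_le hr.le, uIcc_of_le hR0.le]
        exact Icc_subset_Icc le_rfl hR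
      rw [hvol R hR0, intervalIntegral.integral_undef hnI]
    have hlz : liminf (fun R : ℝ => (μ (ball x R)).toReal / R ^ N) atTop = 0 := by
      have heq : (fun R : ℝ => (μ (ball x R)).toReal / R ^ N) =ᶠ[atTop] fun _ => 0 := by
        filter_upwards [eventually_ge_atTop r] with R hR
        rw [hzero R hR, zero_div]
      rw [liminf_congr heq, liminf_const]
    rw [hlim] at hlz
    linarith
end

section
/- Let (X,d) be a metric space, μ a Borel measure on X, and o ∈ X. Assume that μ(B(o,r)) < ∞ for every r > 0, that the function r ↦ μ(B(o,r)) is locally Lipschitz continuous on (0,∞), and that μ({o}) = 0. Then for every μ-measurable function f : X → ℝ that is bounded on bounded subsets of X and every R > 0, one has ∫_{B(o,R)} f dμ = ∫₀^R |f|_{∂B(o,r)} dr. -/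
/-! Write `m r = μ(B(o,r))` and `F r = ∫_{B(o,r)} f dμ`. If `|f| ≤ C` on `B(o,R+1)`, then
`|F y - F x| ≤ C (m y - m x)` for `x ≤ y ≤ R + 1`, so absolute continuity of `m` on `[0,R]`
passes to `F`. Now `m` is Lipschitz on every `[c,R]` with `c > 0` and right-continuous at `0`
because `μ{o} = 0`; being monotone it has an integrable derivative, and letting `c → 0` in the
fundamental theorem of calculus on `[c,R]` shows that `m` is absolutely continuous on `[0,R]`.
Hence `F R = ∫₀ᴿ F'`, and wherever `F` is differentiable at `r < R + 1` the boundary integral,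
a limsup of right difference quotients of `F`, equals `F' r`. -/

open MeasureTheory Metric Filter Set

/-- The boundary integral of `f` on `∂B(o,r)`:
`|f|_{∂B(o,r)} = limsup_{δ→0⁺} (1/δ) ∫_{B(o,r+δ)∖B(o,r)} f dμ`. -/
noncomputable def bdryIntegral {X : Type*} [MetricSpace X] [MeasurableSpace X]
    (μ : Measure X) (f : X → ℝ) (o : X) (r : ℝ) : ℝ :=
  limsup (fun δ : ℝ => (∫ z in ball o (r + δ) \ ball o r, f z ∂μ) / δ)
    (nhdsWithin 0 (Ioi 0))

open scoped Topology

theorem AbsolutelyContinuousOnInterval.of_dist_le_mul {X Y : Type*} [PseudoMetricSpace X]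
    [PseudoMetricSpace Y] {f : ℝ → X} {g : ℝ → Y} {a b C : ℝ}
    (hg : AbsolutelyContinuousOnInterval g a b)
    (hfg : ∀ x ∈ uIcc a b, ∀ y ∈ uIcc a b, dist (f x) (f y) ≤ C * dist (g x) (g y)) :
    AbsolutelyContinuousOnInterval f a b := by
  have hC := (show Tendsto _ _ _ from hg).const_mul C
  rw [mul_zero] at hC
  refine squeeze_zero' (Eventually.of_forall fun _ => Finset.sum_nonneg fun _ _ => dist_nonneg)
    ?_ hC
  filter_upwards [mem_inf_of_right (mem_principal_self _)] with E hE
  rw [Finset.mul_sum]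
  exact Finset.sum_le_sum fun i hi => hfg _ (hE.1 i hi).1 _ (hE.1 i hi).2

theorem integral_deriv_eq_sub_of_forall_Ioc {g : ℝ → ℝ} {a b : ℝ} (hab : a ≤ b)
    (hac : ∀ c ∈ Ioc a b, AbsolutelyContinuousOnInterval g c b)
    (hga : ContinuousWithinAt g (Ioi a) a)
    (hint : IntervalIntegrable (deriv g) volume a b) :
    ∫ x in a..b, deriv g x = g b - g a := by
  rcases hab.eq_or_lt with rfl | hab
  · simp
  have hprim : Tendsto (fun c => ∫ x in c..b, deriv g x) (𝓝[>] a)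
      (𝓝 (∫ x in a..b, deriv g x)) := by
    have := intervalIntegral.continuousOn_primitive_interval_left (a := a) (b := b)
      (uIcc_of_le hab.le ▸ (intervalIntegrable_iff_integrableOn_Icc_of_le hab.le).1 hint)
    rw [uIcc_of_le hab.le] at this
    exact (this a (left_mem_Icc.2 hab.le)).mono_of_mem_nhdsWithin (Icc_mem_nhdsGT hab)
  have hftc : (fun c => ∫ x in c..b, deriv g x) =ᶠ[𝓝[>] a] fun c => g b - g c := by
    filter_upwards [Ioc_mem_nhdsGT hab] with c hc using (hac c hc).integral_deriv_eq_sub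
  exact tendsto_nhds_unique (hprim.congr' hftc) (tendsto_const_nhds.sub hga)

theorem AbsolutelyContinuousOnInterval.of_forall_Ioc {g : ℝ → ℝ} {a b : ℝ} (hab : a ≤ b)
    (hac : ∀ c ∈ Ioc a b, AbsolutelyContinuousOnInterval g c b)
    (hga : ContinuousWithinAt g (Ioi a) a)
    (hint : IntervalIntegrable (deriv g) volume a b) :
    AbsolutelyContinuousOnInterval g a b := by
  have hprim := hint.absolutelyContinuousOnInterval_intervalIntegral left_mem_uIcc
  have hg : ∀ x ∈ uIcc a b, g x = g a + ∫ t in a..x, deriv g t := by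
    intro x hx
    rw [uIcc_of_le hab] at hx
    rw [integral_deriv_eq_sub_of_forall_Ioc hx.1
      (fun c hc => (hac c ⟨hc.1, hc.2.trans hx.2⟩).mono
        (uIcc_subset_uIcc left_mem_uIcc (uIcc_of_le (hc.2.trans hx.2) ▸ ⟨hc.2, hx.2⟩)))
      hga (hint.mono_set (uIcc_subset_uIcc left_mem_uIcc (uIcc_of_le hab ▸ hx)))]
    ring
  refine hprim.of_dist_le_mul (C := 1) fun x hx y hy => ?_
  rw [hg x hx, hg y hy, one_mul, dist_add_left]

section Balls

variable {X : Type*} [MetricSpace X] [MeasurableSpace X] [OpensMeasurableSpace X]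
  {μ : Measure X} {o : X}

theorem tendsto_measure_ball_nhdsGT_zero (hfin : ∀ r, μ (ball o r) ≠ ⊤) :
    Tendsto (fun r => μ (ball o r)) (𝓝[>] 0) (𝓝 (μ {o})) := by
  have := tendsto_measure_biInter_gt (μ := μ) (fun r _ => measurableSet_ball.nullMeasurableSet)
    (fun _ _ _ hij => ball_subset_ball hij) ⟨1, one_pos, hfin 1⟩
  rwa [biInter_gt_ball, closedBall_zero] at this

theorem absolutelyContinuousOnInterval_measure_ball (hfin : ∀ r, μ (ball o r) ≠ ⊤)
    (hLip : LocallyLipschitzOn (Ioi 0) fun r => (μ (ball o r)).toReal) (hpt : μ {o} = 0)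
    {R : ℝ} (hR : 0 ≤ R) :
    AbsolutelyContinuousOnInterval (fun r => (μ (ball o r)).toReal) 0 R := by
  have hmono : Monotone fun r => (μ (ball o r)).toReal := fun x y hxy =>
    ENNReal.toReal_mono (hfin y) (measure_mono (ball_subset_ball hxy))
  refine .of_forall_Ioc hR (fun c hc => ?_) ?_ (hmono.monotoneOn _).intervalIntegrable_deriv
  · obtain ⟨K, hK⟩ := (hLip.mono fun x hx => hc.1.trans_le hx.1)
      |>.exists_lipschitzOnWith_of_compact isCompact_Icc
    exact (uIcc_of_le hc.2 ▸ hK).absolutelyContinuousOnInterval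
  · have := (ENNReal.tendsto_toReal (hpt ▸ ENNReal.zero_ne_top)).comp
      (tendsto_measure_ball_nhdsGT_zero hfin)
    simpa [ContinuousWithinAt, Function.comp_def, hpt] using this

theorem setIntegral_ball_sdiff_ball {f : X → ℝ} {x y : ℝ} (hxy : x ≤ y)
    (hf : IntegrableOn f (ball o y) μ) :
    ∫ z in ball o y \ ball o x, f z ∂μ =
      ∫ z in ball o y, f z ∂μ - ∫ z in ball o x, f z ∂μ :=
  setIntegral_sdiff measurableSet_ball hf (ball_subset_ball hxy)

theorem abs_setIntegral_ball_sub_le {f : X → ℝ} {x y C : ℝ} (hxy : x ≤ y)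
    (hy : μ (ball o y) ≠ ⊤) (hf : IntegrableOn f (ball o y) μ)
    (hC : ∀ z ∈ ball o y, |f z| ≤ C) :
    |∫ z in ball o y, f z ∂μ - ∫ z in ball o x, f z ∂μ| ≤
      C * ((μ (ball o y)).toReal - (μ (ball o x)).toReal) := by
  have hsub := ball_subset_ball (x := o) hxy
  rw [← setIntegral_ball_sdiff_ball hxy hf, ← Real.norm_eq_abs,
    ← ENNReal.toReal_sub_of_le (measure_mono hsub) hy, ← measure_sdiff hsub
    measurableSet_ball.nullMeasurableSet (ne_top_of_le_ne_top hy (measure_mono hsub))]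
  exact norm_setIntegral_le_of_norm_le_const
    ((measure_mono sdiff_subset).trans_lt hy.lt_top) fun z hz => hC z hz.1

theorem dist_setIntegral_ball_le {f : X → ℝ} {R C : ℝ} (hR : μ (ball o R) ≠ ⊤)
    (hf : IntegrableOn f (ball o R) μ) (hC : ∀ z ∈ ball o R, |f z| ≤ C)
    {x y : ℝ} (hx : x ≤ R) (hy : y ≤ R) :
    dist (∫ z in ball o x, f z ∂μ) (∫ z in ball o y, f z ∂μ) ≤
      C * dist (μ (ball o x)).toReal (μ (ball o y)).toReal := by
  wlog hxy : x ≤ y generalizing x y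
  · rw [dist_comm, dist_comm (μ (ball o x)).toReal]
    exact this hy hx (le_of_not_ge hxy)
  have hsub := ball_subset_ball (x := o) hy
  have hy_fin := ne_top_of_le_ne_top hR (measure_mono hsub)
  have hmono : (μ (ball o x)).toReal ≤ (μ (ball o y)).toReal :=
    ENNReal.toReal_mono hy_fin (measure_mono (ball_subset_ball hxy))
  rw [dist_comm, dist_comm (μ (ball o x)).toReal, Real.dist_eq, Real.dist_eq,
    abs_of_nonneg (sub_nonneg.2 hmono)]
  exact abs_setIntegral_ball_sub_le hxy hy_fin (hf.mono_set hsub) fun z hz => hC z (hsub hz)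

theorem bdryIntegral_eq_deriv {f : X → ℝ} {r R : ℝ} (hr : r < R)
    (hf : IntegrableOn f (ball o R) μ)
    (hd : DifferentiableAt ℝ (fun s => ∫ z in ball o s, f z ∂μ) r) :
    bdryIntegral μ f o r = deriv (fun s => ∫ z in ball o s, f z ∂μ) r := by
  refine Tendsto.limsup_eq (hd.hasDerivAt.tendsto_slope_zero_right.congr' ?_)
  filter_upwards [Ioo_mem_nhdsGT (sub_pos.2 hr)] with δ hδ
  rw [setIntegral_ball_sdiff_ball (by linarith [hδ.1])
    (hf.mono_set (ball_subset_ball (by linarith [hδ.2]))), smul_eq_mul, inv_mul_eq_div]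

end Balls

theorem stmt_4 {X : Type*} [MetricSpace X] [MeasurableSpace X] [BorelSpace X]
    (μ : Measure X) (o : X)
    (hfin : ∀ r : ℝ, 0 < r → μ (ball o r) < ⊤)
    (hLip : ∀ a : ℝ, 0 < a → ∃ (K : NNReal) (t : Set ℝ), t ∈ nhdsWithin a (Ioi 0) ∧
      LipschitzOnWith K (fun r : ℝ => (μ (ball o r)).toReal) t)
    (hpt : μ {o} = 0)
    (f : X → ℝ) (hf : Measurable f)
    (hbd : ∀ s : Set X, Bornology.IsBounded s → ∃ C : ℝ, ∀ z ∈ s, |f z| ≤ C) :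
    ∀ R : ℝ, 0 < R →
      ∫ z in ball o R, f z ∂μ = ∫ r in (0:ℝ)..R, bdryIntegral μ f o r := by
  intro R hR
  set F : ℝ → ℝ := fun r => ∫ z in ball o r, f z ∂μ
  have hfin' : ∀ r, μ (ball o r) ≠ ⊤ := fun r => by
    rcases lt_or_ge 0 r with hr | hr
    · exact (hfin r hr).ne
    · simp [ball_eq_empty.2 hr]
  obtain ⟨C, hC⟩ := hbd (ball o (R + 1)) isBounded_ball
  have hfint : IntegrableOn f (ball o (R + 1)) μ :=
    Measure.integrableOn_of_bounded (hfin' _) hf.aestronglyMeasurable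
      ((ae_restrict_iff' measurableSet_ball).2 (Eventually.of_forall hC))
  have hF_ac : AbsolutelyContinuousOnInterval F 0 R :=
    (absolutelyContinuousOnInterval_measure_ball hfin' (fun a ha => hLip a ha) hpt hR.le)
      |>.of_dist_le_mul fun x hx y hy =>
        dist_setIntegral_ball_le (hfin' _) hfint hC (by linarith [(uIcc_of_le hR.le ▸ hx).2])
          (by linarith [(uIcc_of_le hR.le ▸ hy).2])
  have hbdry : ∀ᵐ r, r ∈ uIoc 0 R → deriv F r = bdryIntegral μ f o r := by
    filter_upwards [hF_ac.ae_differentiableAt] with r hr hrR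
    rw [uIoc_of_le hR.le] at hrR
    exact (bdryIntegral_eq_deriv (by linarith [hrR.2]) hfint
      (hr (uIcc_of_le hR.le ▸ Ioc_subset_Icc_self hrR))).symm
  calc ∫ z in ball o R, f z ∂μ = F R - F 0 := by simp [F]
    _ = ∫ r in (0:ℝ)..R, deriv F r := hF_ac.integral_deriv_eq_sub.symm
    _ = ∫ r in (0:ℝ)..R, bdryIntegral μ f o r := intervalIntegral.integral_congr_ae hbdry
end

section
/- Let (X,d) be a metric space, μ a Borel measure on X, and o ∈ X. Assume that μ(B(o,r)) < ∞ for every r > 0 and that the function r ↦ μ(B(o,r)) is locally Lipschitz continuous on (0,∞). Let φ : (0,∞) → [0,∞) be continuous and monotone (non-increasing or non-decreasing), and let f : X → [0,∞) be μ-measurable and bounded on bounded subsets of X. Then for every r > 0, the boundary integral of the function z ↦ φ(d(o,z)) f(z) on ∂B(o,r) equals φ(r) · |f|_{∂B(o,r)}, i.e., |(φ∘d_o)·f|_{∂B(o,r)} = φ(r)|f|_{∂B(o,r)}, where d_o denotes the distance function z ↦ d(o,z). -/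
/-!
On the annulus `B(o,r+δ) ∖ B(o,r)` the distance to `o` lies in `[r, r+δ)`, so by continuity
`φ(d(o,z)) - φ(r)` is uniformly small there as `δ → 0⁺`. The local Lipschitz bound gives
`μ(B(o,r+δ) ∖ B(o,r)) ≤ Kδ`, and `f` is bounded near the sphere, so
`(1/δ) ∫ (φ ∘ d_o - φ(r)) f dμ → 0` while the averages `(1/δ) ∫ f dμ` stay bounded.
A vanishing perturbation does not change a limsup, and `φ(r) ≥ 0` factors out of it.
-/

open MeasureTheory Metric Filter Set

open scoped NNReal Topology

section Limsup

variable {ι : Type*} {l : Filter ι} [l.NeBot] {u w : ι → ℝ}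

lemma limsup_add_of_tendsto_zero (hu : IsBoundedUnder (· ≤ ·) l u)
    (hu' : IsBoundedUnder (· ≥ ·) l u) (hw : Tendsto w l (𝓝 0)) :
    limsup (u + w) l = limsup u l := by
  have hw_le := hw.isBoundedUnder_le
  have hw_ge := hw.isBoundedUnder_ge
  refine le_antisymm ?_ ?_
  · calc limsup (u + w) l ≤ limsup u l + limsup w l :=
          limsup_add_le hu' hu hw_ge.isCoboundedUnder_le hw_le
      _ = limsup u l := by rw [hw.limsup_eq, add_zero]
  · calc limsup u l = limsup u l + liminf w l := by rw [hw.liminf_eq, add_zero]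
      _ ≤ limsup (u + w) l := le_limsup_add hu hu'.isCoboundedUnder_le hw_le hw_ge

lemma limsup_const_mul_of_nonneg {c : ℝ} (hc : 0 ≤ c) (hu : IsBoundedUnder (· ≤ ·) l u)
    (hu' : IsBoundedUnder (· ≥ ·) l u) :
    limsup (fun x => c * u x) l = c * limsup u l :=
  ((monotone_mul_left_of_nonneg hc).map_limsup_of_continuousAt u
    (continuous_const_mul c).continuousAt hu hu'.isCoboundedUnder_le).symm

lemma limsup_const_mul_add_of_tendsto_zero {c M : ℝ} (hc : 0 ≤ c) (hu : ∀ᶠ x in l, |u x| ≤ M)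
    (hw : Tendsto w l (𝓝 0)) :
    limsup (fun x => c * u x + w x) l = c * limsup u l := by
  have bdd : ∀ {v : ι → ℝ} {N : ℝ}, (∀ᶠ x in l, |v x| ≤ N) →
      IsBoundedUnder (· ≤ ·) l v ∧ IsBoundedUnder (· ≥ ·) l v :=
    fun h => isBoundedUnder_le_abs.1 (isBoundedUnder_of_eventually_le h)
  have hcu : ∀ᶠ x in l, |c * u x| ≤ c * M := hu.mono fun x h => by
    rw [abs_mul, abs_of_nonneg hc]
    exact mul_le_mul_of_nonneg_left h hc
  exact (limsup_add_of_tendsto_zero (bdd hcu).1 (bdd hcu).2 hw).trans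
    (limsup_const_mul_of_nonneg hc (bdd hu).1 (bdd hu).2)

end Limsup

section Annulus

variable {X : Type*} [MetricSpace X] {o : X} {r : ℝ}

lemma eventually_forall_mem_annulus {p : ℝ → Prop} (hp : ∀ᶠ s in 𝓝[≥] r, p s) :
    ∀ᶠ δ in 𝓝[>] 0, ∀ z ∈ ball o (r + δ) \ ball o r, p (dist o z) := by
  obtain ⟨b, hb, hIco⟩ := mem_nhdsGE_iff_exists_Ico_subset.1 hp
  filter_upwards [Ioo_mem_nhdsGT (sub_pos.2 hb)] with δ hδ z ⟨hz, hz'⟩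
  rw [mem_ball'] at hz hz'
  exact hIco ⟨not_lt.1 hz', by linarith [hδ.2, mem_Ioi.1 hb]⟩

lemma eventually_measureReal_annulus_le [MeasurableSpace X] [OpensMeasurableSpace X]
    {μ : Measure X} {K : ℝ≥0} {t : Set ℝ}
    (hfin : ∀ s, r < s → μ (ball o s) ≠ ⊤)
    (hK : LipschitzOnWith K (fun s => μ.real (ball o s)) t) (ht : t ∈ 𝓝[≥] r) :
    ∀ᶠ δ in 𝓝[>] 0, μ (ball o (r + δ) \ ball o r) < ⊤ ∧
      μ.real (ball o (r + δ) \ ball o r) ≤ K * δ := by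
  obtain ⟨b, hb, hIco⟩ := mem_nhdsGE_iff_exists_Ico_subset.1 ht
  filter_upwards [Ioo_mem_nhdsGT (sub_pos.2 hb)] with δ ⟨hδ, hδb⟩
  have hfin' := hfin (r + δ) (by linarith)
  refine ⟨(measure_mono sdiff_subset).trans_lt hfin'.lt_top, ?_⟩
  rw [measureReal_sdiff (ball_subset_ball (by linarith)) measurableSet_ball hfin']
  have hdist := hK.dist_le_mul (r + δ) (hIco ⟨by linarith, by linarith⟩) r
    (hIco ⟨le_rfl, mem_Ioi.1 hb⟩)
  rw [Real.dist_eq, Real.dist_eq, add_sub_cancel_left, abs_of_pos hδ] at hdist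
  exact (le_abs_self _).trans hdist

end Annulus

section AverageOverShrinkingSets

variable {X : Type*} [MeasurableSpace X] {μ : Measure X} {s : ℝ → Set X} {K : ℝ≥0}

lemma eventually_norm_setIntegral_div_le {g : X → ℝ} {C : ℝ} (hC : 0 ≤ C)
    (hs : ∀ᶠ δ in 𝓝[>] 0, μ (s δ) < ⊤ ∧ μ.real (s δ) ≤ K * δ)
    (hg : ∀ᶠ δ in 𝓝[>] 0, ∀ z ∈ s δ, ‖g z‖ ≤ C) :
    ∀ᶠ δ in 𝓝[>] 0, ‖(∫ z in s δ, g z ∂μ) / δ‖ ≤ C * K := by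
  filter_upwards [hs, hg, self_mem_nhdsWithin] with δ ⟨hfin, hμ⟩ hgδ (hδ : 0 < δ)
  rw [norm_div, Real.norm_of_nonneg hδ.le, div_le_iff₀ hδ]
  calc ‖∫ z in s δ, g z ∂μ‖ ≤ C * μ.real (s δ) := norm_setIntegral_le_of_norm_le_const hfin hgδ
    _ ≤ C * (K * δ) := mul_le_mul_of_nonneg_left hμ hC
    _ = C * K * δ := by ring

lemma tendsto_setIntegral_div_zero {g : X → ℝ}
    (hs : ∀ᶠ δ in 𝓝[>] 0, μ (s δ) < ⊤ ∧ μ.real (s δ) ≤ K * δ)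
    (hg : ∀ ε > 0, ∀ᶠ δ in 𝓝[>] 0, ∀ z ∈ s δ, ‖g z‖ ≤ ε) :
    Tendsto (fun δ => (∫ z in s δ, g z ∂μ) / δ) (𝓝[>] 0) (𝓝 0) := by
  refine NormedAddGroup.tendsto_nhds_zero.2 fun ε hε => ?_
  have hε' : 0 < ε / (K + 1) := by positivity
  filter_upwards [eventually_norm_setIntegral_div_le hε'.le hs (hg _ hε')] with δ hδ
  refine hδ.trans_lt ?_
  rw [div_mul_eq_mul_div, div_lt_iff₀ (by positivity)]
  exact mul_lt_mul_of_pos_left (lt_add_one _) hε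

lemma tendsto_setIntegral_mul_div_zero {ψ f : X → ℝ} {C : ℝ}
    (hs : ∀ᶠ δ in 𝓝[>] 0, μ (s δ) < ⊤ ∧ μ.real (s δ) ≤ K * δ)
    (hfC : ∀ᶠ δ in 𝓝[>] 0, ∀ z ∈ s δ, ‖f z‖ ≤ C)
    (hψ : ∀ ε > 0, ∀ᶠ δ in 𝓝[>] 0, ∀ z ∈ s δ, ‖ψ z‖ ≤ ε) :
    Tendsto (fun δ => (∫ z in s δ, ψ z * f z ∂μ) / δ) (𝓝[>] 0) (𝓝 0) := by
  refine tendsto_setIntegral_div_zero hs fun ε hε => ?_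
  have hC : 0 < |C| + 1 := by positivity
  filter_upwards [hfC, hψ (ε / (|C| + 1)) (div_pos hε hC)] with δ hfδ hψδ z hz
  calc ‖ψ z * f z‖ = ‖ψ z‖ * ‖f z‖ := norm_mul _ _
    _ ≤ ε / (|C| + 1) * (|C| + 1) :=
      mul_le_mul (hψδ z hz) ((hfδ z hz).trans (by linarith [le_abs_self C])) (norm_nonneg _)
        (by positivity)
    _ = ε := div_mul_cancel₀ _ hC.ne'

end AverageOverShrinkingSets

lemma setIntegral_mul_eq_sub_mul_add {X : Type*} [MeasurableSpace X] {μ : Measure X}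
    {s : Set X} {ψ f : X → ℝ} {c C M : ℝ} (hs : MeasurableSet s) (hμs : μ s < ⊤)
    (hψ : AEStronglyMeasurable ψ (μ.restrict s)) (hf : AEStronglyMeasurable f μ)
    (hψc : ∀ z ∈ s, ‖ψ z - c‖ ≤ M) (hfC : ∀ z ∈ s, ‖f z‖ ≤ C) :
    ∫ z in s, ψ z * f z ∂μ = ∫ z in s, (ψ z - c) * f z ∂μ + c * ∫ z in s, f z ∂μ := by
  have hfi : IntegrableOn f s μ :=
    Measure.integrableOn_of_bounded hμs.ne hf ((ae_restrict_iff' hs).2 (ae_of_all _ hfC))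
  have hψfi : IntegrableOn (fun z => (ψ z - c) * f z) s μ :=
    hfi.bdd_mul (hψ.sub aestronglyMeasurable_const) ((ae_restrict_iff' hs).2 (ae_of_all _ hψc))
  rw [← integral_const_mul, ← integral_add hψfi (hfi.const_mul c)]
  simp only [sub_mul, sub_add_cancel]

theorem stmt_5_general {X : Type*} [MetricSpace X] [MeasurableSpace X] [BorelSpace X]
    (μ : Measure X) (o : X)
    (hfin : ∀ r : ℝ, 0 < r → μ (ball o r) < ⊤)
    (hLip : ∀ a : ℝ, 0 < a → ∃ (K : NNReal) (t : Set ℝ), t ∈ nhdsWithin a (Ioi 0) ∧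
      LipschitzOnWith K (fun r : ℝ => (μ (ball o r)).toReal) t)
    (φ : ℝ → ℝ) (hφc : ContinuousOn φ (Ioi 0)) (hφ0 : ∀ r : ℝ, 0 < r → 0 ≤ φ r)
    (f : X → ℝ) (hf : Measurable f)
    (hbd : ∀ s : Set X, Bornology.IsBounded s → ∃ C : ℝ, ∀ z ∈ s, |f z| ≤ C) :
    ∀ r : ℝ, 0 < r →
      bdryIntegral μ (fun z => φ (dist o z) * f z) o r = φ r * bdryIntegral μ f o r := by
  intro r hr
  obtain ⟨K, t, ht, hK⟩ := hLip r hr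
  rw [nhdsWithin_eq_nhds.2 (Ioi_mem_nhds hr)] at ht
  obtain ⟨C, hC⟩ := hbd (ball o (r + 1)) isBounded_ball
  have hC0 : 0 ≤ C := (abs_nonneg _).trans (hC o (mem_ball_self (by linarith)))
  set A : ℝ → Set X := fun δ => ball o (r + δ) \ ball o r
  have hA : ∀ δ, MeasurableSet (A δ) := fun δ => measurableSet_ball.diff measurableSet_ball
  have hμA : ∀ᶠ δ in 𝓝[>] 0, μ (A δ) < ⊤ ∧ μ.real (A δ) ≤ K * δ :=
    eventually_measureReal_annulus_le (fun s hs => (hfin s (hr.trans hs)).ne) hK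
      (nhdsWithin_le_nhds ht)
  have hfA : ∀ᶠ δ in 𝓝[>] 0, ∀ z ∈ A δ, ‖f z‖ ≤ C :=
    (eventually_forall_mem_annulus (nhdsWithin_le_nhds (Iio_mem_nhds (lt_add_one r)))).mono
      fun δ h z hz => hC z (mem_ball'.2 (h z hz))
  have hφA : ∀ ε > 0, ∀ᶠ δ in 𝓝[>] 0, ∀ z ∈ A δ, ‖φ (dist o z) - φ r‖ ≤ ε := fun ε hε =>
    eventually_forall_mem_annulus
      (nhdsWithin_le_nhds ((hφc.continuousAt (Ioi_mem_nhds hr)).eventually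
        (closedBall_mem_nhds _ hε)))
  have hφd : ∀ δ, ContinuousOn (fun z => φ (dist o z)) (A δ) := fun δ =>
    hφc.comp (continuous_const.dist continuous_id).continuousOn fun z hz =>
      hr.trans_le (not_lt.1 (mem_ball'.not.1 hz.2))
  set g : ℝ → ℝ := fun δ => (∫ z in A δ, f z ∂μ) / δ
  set w : ℝ → ℝ := fun δ => (∫ z in A δ, (φ (dist o z) - φ r) * f z ∂μ) / δ
  have hsplit : ∀ᶠ δ in 𝓝[>] 0,
      (∫ z in A δ, φ (dist o z) * f z ∂μ) / δ = φ r * g δ + w δ := by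
    filter_upwards [hμA, hfA, hφA 1 one_pos] with δ ⟨hfinδ, _⟩ hfδ hφδ
    rw [setIntegral_mul_eq_sub_mul_add (hA δ) hfinδ ((hφd δ).aestronglyMeasurable (hA δ))
      hf.aestronglyMeasurable hφδ hfδ]
    ring
  have hw : Tendsto w (𝓝[>] 0) (𝓝 0) := tendsto_setIntegral_mul_div_zero hμA hfA hφA
  have hg : ∀ᶠ δ in 𝓝[>] 0, |g δ| ≤ C * K := eventually_norm_setIntegral_div_le hC0 hμA hfA
  exact (limsup_congr hsplit).trans
    (limsup_const_mul_add_of_tendsto_zero (hφ0 r hr) hg hw)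

theorem stmt_5 {X : Type*} [MetricSpace X] [MeasurableSpace X] [BorelSpace X]
    (μ : Measure X) (o : X)
    (hfin : ∀ r : ℝ, 0 < r → μ (ball o r) < ⊤)
    (hLip : ∀ a : ℝ, 0 < a → ∃ (K : NNReal) (t : Set ℝ), t ∈ nhdsWithin a (Ioi 0) ∧
      LipschitzOnWith K (fun r : ℝ => (μ (ball o r)).toReal) t)
    (φ : ℝ → ℝ) (hφc : ContinuousOn φ (Ioi 0)) (hφ0 : ∀ r : ℝ, 0 < r → 0 ≤ φ r)
    (hφmono : MonotoneOn φ (Ioi 0) ∨ AntitoneOn φ (Ioi 0))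
    (f : X → ℝ) (hf : Measurable f) (hf0 : ∀ z, 0 ≤ f z)
    (hbd : ∀ s : Set X, Bornology.IsBounded s → ∃ C : ℝ, ∀ z ∈ s, |f z| ≤ C) :
    ∀ r : ℝ, 0 < r →
      bdryIntegral μ (fun z => φ (dist o z) * f z) o r = φ r * bdryIntegral μ f o r :=
  stmt_5_general μ o hfin hLip φ hφc hφ0 f hf hbd
end

section
/- Let (X,d) be a metric space, μ a Borel measure on X, and o ∈ X. Assume that μ(B(o,r)) < ∞ for every r > 0, that the function r ↦ μ(B(o,r)) is locally Lipschitz continuous on (0,∞), and that μ({o}) = 0. Let φ : (0,∞) → [0,∞) be continuous and monotone (non-increasing or non-decreasing), and let f : X → [0,∞) be μ-measurable and bounded on bounded subsets of X. Then for every R > 0, ∫_{B(o,R)} φ(d(o,z)) f(z) dμ(z) = ∫₀^R φ(r) |f|_{∂B(o,r)} dr, as an equality of values in [0,∞]. -/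
/-! Let `ν = f μ` and let `σ` be the image of `ν` under `z ↦ d(o, z)`. The function
`F r = ν (closedBall o r)` is a Stieltjes function whose measure is `σ`. Since `r ↦ μ(B(o,r))` is
continuous on `(0, ∞)` and `μ {o} = 0`, all spheres are `μ`-null, so `|f|_{∂B(o,r)}` is the right
derivative of `F`, which by Lebesgue's differentiation theorem equals `dσ/dr` for a.e. `r`.
Local Lipschitz continuity of `r ↦ μ(B(o,r))` makes the image of `μ`, and with it `σ`, absolutely
continuous on `(0, ∞)`; hence `σ = (dσ/dr) dr` on `(0, R)`, and the formula is the change of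
variables `r = d(o, z)`. -/

open MeasureTheory Metric Filter Set

open scoped ENNReal NNReal

namespace StieltjesFunction

theorem measure_le_smul_volume_of_lipschitzWith (S : StieltjesFunction ℝ) {K : ℝ≥0}
    (hS : LipschitzWith K S) : S.measure ≤ K • volume := by
  have hincr : ∀ x y, x ≤ y → S y - S x ≤ K * (y - x) := fun x y hxy => by
    simpa [Real.dist_eq, abs_of_nonneg (sub_nonneg.2 (S.mono hxy)),
      abs_of_nonneg (sub_nonneg.2 hxy)] using hS.dist_le_mul y x
  -- `K x - S x` is again a Stieltjes function, so `K • volume = S.measure + G.measure`.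
  let G : StieltjesFunction ℝ :=
    { toFun := fun x => K * x - S x
      mono' := fun x y hxy => by linarith [hincr x y hxy]
      right_continuous' := fun x =>
        ((continuous_const.mul continuous_id).continuousWithinAt).sub (S.right_continuous x) }
  have hsum : S + G = K • StieltjesFunction.id := by
    ext x
    simp [G]
    rfl
  calc S.measure ≤ S.measure + G.measure := Measure.le_add_right le_rfl
    _ = K • volume := by rw [← measure_add, hsum, measure_smul, ← Real.volume_eq_stieltjes_id]

theorem restrict_Ioc_measure_le_of_lipschitzOnWith (S : StieltjesFunction ℝ) {c d : ℝ}
    (hcd : c ≤ d) {K : ℝ≥0} (hS : LipschitzOnWith K S (Icc c d)) :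
    S.measure.restrict (Ioc c d) ≤ K • volume := by
  have hclamp : LipschitzWith K (IccExtend hcd ((Icc c d).domRestrict S)) := by
    have h := hS.to_restrict.comp (LipschitzWith.projIcc hcd)
    rwa [mul_one] at h
  let S' : StieltjesFunction ℝ :=
    { toFun := IccExtend hcd ((Icc c d).domRestrict S)
      mono' := fun x y hxy => S.mono (monotone_projIcc hcd hxy)
      right_continuous' := fun x => hclamp.continuous.continuousWithinAt }
  have hagree : S.measure.restrict (Ioc c d) = S'.measure.restrict (Ioc c d) := by
    refine Measure.ext_of_Ioc _ _ fun a b _ => ?_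
    rw [Measure.restrict_apply measurableSet_Ioc, Measure.restrict_apply measurableSet_Ioc,
      Ioc_inter_Ioc]
    rcases le_or_gt (a ⊔ c) (b ⊓ d) with h | h
    · have hl : a ⊔ c ∈ Icc c d := ⟨le_sup_right, h.trans inf_le_right⟩
      have hr : b ⊓ d ∈ Icc c d := ⟨le_sup_right.trans h, inf_le_right⟩
      simp only [measure_Ioc, S', IccExtend_of_mem hcd _ hl, IccExtend_of_mem hcd _ hr]
      rfl
    · simp [Ioc_eq_empty_of_le h.le]
  calc S.measure.restrict (Ioc c d) = S'.measure.restrict (Ioc c d) := hagree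
    _ ≤ S'.measure := Measure.restrict_le_self
    _ ≤ K • volume := S'.measure_le_smul_volume_of_lipschitzWith hclamp

theorem absolutelyContinuous_restrict_of_locallyLipschitzOn (S : StieltjesFunction ℝ)
    {U : Set ℝ} (hU : IsOpen U) (hS : LocallyLipschitzOn U S) :
    S.measure.restrict U ≪ volume := by
  intro N hN
  rw [Measure.restrict_apply' hU.measurableSet]
  refine measure_null_of_locally_null _ fun x hx => ?_
  obtain ⟨K, t, ht, hSt⟩ := hS hx.2
  rw [hU.nhdsWithin_eq hx.2] at ht
  obtain ⟨ε, hε, hεt⟩ := nhds_basis_closedBall.mem_iff.1 ht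
  rw [Real.closedBall_eq_Icc] at hεt
  refine ⟨N ∩ U ∩ Ioo (x - ε) (x + ε),
    inter_mem_nhdsWithin _ (Ioo_mem_nhds (by linarith) (by linarith)), ?_⟩
  have hle : S.measure.restrict (Ioc (x - ε) (x + ε)) ≤ K • volume :=
    S.restrict_Ioc_measure_le_of_lipschitzOnWith (by linarith) (hSt.mono hεt)
  refine measure_mono_null (t := N ∩ Ioc (x - ε) (x + ε))
    (fun y hy => ⟨hy.1.1, Ioo_subset_Ioc_self hy.2⟩) ?_
  rw [← Measure.restrict_apply' measurableSet_Ioc]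
  exact le_zero_iff.1 ((hle N).trans (by simp [hN]))

end StieltjesFunction

theorem MeasureTheory.Measure.restrict_eq_restrict_withDensity_rnDeriv {α : Type*}
    [MeasurableSpace α] {μ ν : Measure α} [μ.HaveLebesgueDecomposition ν] {s : Set α}
    (h : μ.restrict s ≪ ν) : μ.restrict s = (ν.withDensity (μ.rnDeriv ν)).restrict s := by
  have hsing : (μ.singularPart ν).restrict s = 0 :=
    Measure.eq_zero_of_absolutelyContinuous_of_mutuallySingular
      ((Measure.absolutelyContinuous_of_le
        (Measure.restrict_mono le_rfl (μ.singularPart_le ν))).trans h)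
      ((μ.mutuallySingular_singularPart ν).restrict s)
  conv_lhs => rw [μ.haveLebesgueDecomposition_add ν]
  rw [Measure.restrict_add, hsing, zero_add]

theorem MeasureTheory.setLIntegral_eq_setLIntegral_rnDeriv_mul {α : Type*} [MeasurableSpace α]
    {μ ν : Measure α} [SigmaFinite μ] [μ.HaveLebesgueDecomposition ν] {s : Set α}
    (hs : MeasurableSet s) (h : μ.restrict s ≪ ν)
    (g : α → ℝ≥0∞) : ∫⁻ x in s, g x ∂μ = ∫⁻ x in s, μ.rnDeriv ν x * g x ∂ν := by
  rw [Measure.restrict_eq_restrict_withDensity_rnDeriv h, restrict_withDensity hs,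
    lintegral_withDensity_eq_lintegral_mul_non_measurable _ (Measure.measurable_rnDeriv _ _)
      (ae_restrict_of_ae (μ.rnDeriv_lt_top ν))]
  rfl

theorem MeasureTheory.withDensity_ofReal_ne_top {α : Type*} [MeasurableSpace α]
    {μ : Measure α} {f : α → ℝ} {s : Set α} (hs : MeasurableSet s) (hμs : μ s ≠ ∞)
    (hbd : ∃ C, ∀ z ∈ s, |f z| ≤ C) : μ.withDensity (fun z => ENNReal.ofReal (f z)) s ≠ ∞ := by
  obtain ⟨C, hC⟩ := hbd
  rw [withDensity_apply _ hs]
  refine ne_top_of_le_ne_top (ENNReal.mul_ne_top (ENNReal.ofReal_ne_top (r := C)) hμs) ?_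
  calc ∫⁻ z in s, ENNReal.ofReal (f z) ∂μ ≤ ∫⁻ _ in s, ENNReal.ofReal C ∂μ :=
        setLIntegral_mono measurable_const fun z hz =>
          ENNReal.ofReal_le_ofReal ((le_abs_self _).trans (hC z hz))
    _ = ENNReal.ofReal C * μ s := setLIntegral_const _ _

theorem MeasureTheory.setIntegral_eq_measureReal_withDensity {α : Type*} [MeasurableSpace α]
    {μ : Measure α} {f : α → ℝ} (hf : Measurable f) (hf0 : ∀ z, 0 ≤ f z) {s : Set α}
    (hs : MeasurableSet s) :
    ∫ z in s, f z ∂μ = (μ.withDensity (fun z => ENNReal.ofReal (f z))).real s := by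
  rw [integral_eq_lintegral_of_nonneg_ae (Eventually.of_forall hf0) hf.aestronglyMeasurable,
    measureReal_def, withDensity_apply _ hs]

theorem LocallyLipschitzOn.congr {α β : Type*} [PseudoEMetricSpace α] [PseudoEMetricSpace β]
    {s : Set α} {f g : α → β} (hf : LocallyLipschitzOn s f) (hfg : EqOn f g s) :
    LocallyLipschitzOn s g := by
  intro x hx
  obtain ⟨K, t, ht, hK⟩ := hf hx
  refine ⟨K, t ∩ s, inter_mem ht self_mem_nhdsWithin, fun y hy z hz => ?_⟩
  rw [← hfg hy.2, ← hfg hz.2]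
  exact hK hy.1 hz.1

theorem MeasureTheory.setLIntegral_ofReal_mul_eq_withDensity {α : Type*} [MeasurableSpace α]
    {μ : Measure α} {f : α → ℝ} (hf : Measurable f) (hf0 : ∀ z, 0 ≤ f z) (g : α → ℝ) {s : Set α}
    (hs : MeasurableSet s) :
    ∫⁻ z in s, ENNReal.ofReal (g z * f z) ∂μ
      = ∫⁻ z in s, ENNReal.ofReal (g z) ∂(μ.withDensity fun z => ENNReal.ofReal (f z)) := by
  rw [restrict_withDensity hs, lintegral_withDensity_eq_lintegral_mul_non_measurable _
    (by fun_prop) (ae_of_all _ fun _ => ENNReal.ofReal_lt_top)]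
  exact lintegral_congr fun z => by rw [Pi.mul_apply, ENNReal.ofReal_mul' (hf0 z), mul_comm]

section RadialDistribution

variable {X : Type*} [PseudoMetricSpace X] [MeasurableSpace X]

theorem ball_ae_eq_closedBall {μ : Measure X} {o : X} {r : ℝ} (h : μ (sphere o r) = 0) :
    ball o r =ᵐ[μ] closedBall o r :=
  ae_eq_set.2 ⟨by simp [sdiff_eq_empty.2 ball_subset_closedBall], by rwa [closedBall_sdiff_ball]⟩

variable [OpensMeasurableSpace X]

def radialStieltjes (ν : Measure X) (o : X) (hν : ∀ r, ν (closedBall o r) ≠ ∞) :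
    StieltjesFunction ℝ where
  toFun r := ν.real (closedBall o r)
  mono' _ s hrs := measureReal_mono (closedBall_subset_closedBall hrs) (hν s)
  right_continuous' r := by
    have h := tendsto_measure_biInter_gt (μ := ν) (a := r)
      (fun _ _ => measurableSet_closedBall.nullMeasurableSet)
      (fun _ _ _ hij => closedBall_subset_closedBall hij) ⟨r + 1, by linarith, hν _⟩
    rw [biInter_gt_closedBall] at h
    exact continuousWithinAt_Ioi_iff_Ici.1 ((ENNReal.tendsto_toReal (hν r)).comp h)

theorem radialStieltjes_apply (ν : Measure X) (o : X) (hν : ∀ r, ν (closedBall o r) ≠ ∞)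
    (r : ℝ) : radialStieltjes ν o hν r = ν.real (closedBall o r) := rfl

theorem radialStieltjes_measure (ν : Measure X) (o : X) (hν : ∀ r, ν (closedBall o r) ≠ ∞) :
    (radialStieltjes ν o hν).measure = ν.map (dist o) := by
  refine Measure.ext_of_Ioc _ _ fun a b hab => ?_
  have hpre : dist o ⁻¹' Ioc a b = closedBall o b \ closedBall o a := by
    ext z
    simp [dist_comm o z, and_comm]
  rw [StieltjesFunction.measure_Ioc, Measure.map_apply (by fun_prop) measurableSet_Ioc, hpre,
    radialStieltjes_apply, radialStieltjes_apply,
    ← measureReal_sdiff (closedBall_subset_closedBall hab.le) measurableSet_closedBall (hν b),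
    ofReal_measureReal (ne_top_of_le_ne_top (hν b) (measure_mono sdiff_subset))]

theorem measure_sphere_eq_zero_of_continuousWithinAt {μ : Measure X} {o : X} {r : ℝ}
    (hfin : ∀ s, μ (ball o s) ≠ ∞)
    (hcont : ContinuousWithinAt (fun s => μ.real (ball o s)) (Ioi r) r) :
    μ (sphere o r) = 0 := by
  have hle : ∀ s ∈ Ioi r, μ.real (sphere o r) ≤ μ.real (ball o s) - μ.real (ball o r) := by
    intro s hs
    rw [← measureReal_sdiff (ball_subset_ball (le_of_lt hs)) measurableSet_ball (hfin s)]
    refine measureReal_mono (fun z hz => ⟨?_, ?_⟩)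
      (ne_top_of_le_ne_top (hfin s) (measure_mono sdiff_subset))
    · rw [mem_sphere] at hz
      exact mem_ball.2 (hz ▸ hs)
    · rw [mem_sphere] at hz
      simp [hz]
  have hlim : Tendsto (fun s => μ.real (ball o s) - μ.real (ball o r))
      (nhdsWithin r (Ioi r)) (nhds 0) := by
    simpa using hcont.tendsto.sub_const (μ.real (ball o r))
  have hsph : μ.real (sphere o r) ≤ 0 := ge_of_tendsto hlim (eventually_nhdsWithin_of_forall hle)
  exact (measureReal_eq_zero_iff (ne_top_of_le_ne_top (hfin (r + 1))
    (measure_mono (sphere_subset_ball (lt_add_one r))))).1 (le_antisymm hsph measureReal_nonneg)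

end RadialDistribution

theorem map_dist_restrict_Ioi_absolutelyContinuous {X : Type*} [PseudoMetricSpace X]
    [MeasurableSpace X] [OpensMeasurableSpace X] {μ : Measure X} {o : X}
    (hcb : ∀ r, μ (closedBall o r) ≠ ∞) (hsph : ∀ r, μ (sphere o r) = 0)
    (hLip : LocallyLipschitzOn (Ioi 0) (fun r => μ.real (ball o r))) :
    (μ.map (dist o)).restrict (Ioi 0) ≪ volume := by
  rw [← radialStieltjes_measure μ o hcb]
  exact StieltjesFunction.absolutelyContinuous_restrict_of_locallyLipschitzOn _ isOpen_Ioi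
    (hLip.congr fun r _ => measureReal_congr (ball_ae_eq_closedBall (hsph r)))

section MetricSpace

variable {X : Type*} [MetricSpace X] [MeasurableSpace X] [OpensMeasurableSpace X]

theorem measure_sphere_eq_zero {μ : Measure X} {o : X} (hfin : ∀ r, μ (ball o r) ≠ ∞)
    (hcont : ContinuousOn (fun r => μ.real (ball o r)) (Ioi 0)) (hpt : μ {o} = 0) (r : ℝ) :
    μ (sphere o r) = 0 := by
  rcases lt_trichotomy r 0 with h | rfl | h
  · simp [sphere_eq_empty_of_neg h]
  · rwa [sphere_zero]
  · exact measure_sphere_eq_zero_of_continuousWithinAt hfin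
      (hcont.continuousAt (Ioi_mem_nhds h)).continuousWithinAt

theorem bdryIntegral_eq_of_hasDerivAt {μ : Measure X} {f : X → ℝ} (hf : Measurable f)
    (hf0 : ∀ z, 0 ≤ f z) {o : X} (hsph : ∀ r, μ (sphere o r) = 0)
    (hν : ∀ r, μ.withDensity (fun z => ENNReal.ofReal (f z)) (closedBall o r) ≠ ∞) {r d : ℝ}
    (hd : HasDerivAt (radialStieltjes _ o hν) d r) : bdryIntegral μ f o r = d := by
  set ν := μ.withDensity (fun z => ENNReal.ofReal (f z))
  have hνsph : ∀ s, ν (sphere o s) = 0 := fun s => withDensity_absolutelyContinuous μ _ (hsph s)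
  have hann : ∀ δ > 0, ∫ z in ball o (r + δ) \ ball o r, f z ∂μ
      = radialStieltjes ν o hν (r + δ) - radialStieltjes ν o hν r := by
    intro δ hδ
    rw [setIntegral_eq_measureReal_withDensity hf hf0 (measurableSet_ball.diff measurableSet_ball),
      measureReal_congr ((ball_ae_eq_closedBall (hνsph _)).diff (ball_ae_eq_closedBall (hνsph r))),
      measureReal_sdiff (closedBall_subset_closedBall (by linarith)) measurableSet_closedBall
        (hν _)]
    rfl
  refine (hd.tendsto_slope_zero_right.congr' ?_).limsup_eq
  filter_upwards [self_mem_nhdsWithin] with δ hδ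
  rw [hann δ hδ, smul_eq_mul, div_eq_inv_mul]

theorem setLIntegral_ball_eq_setLIntegral_map_dist {ν : Measure X} {o : X} (hpt : ν {o} = 0)
    {g : ℝ → ℝ≥0∞} {R : ℝ} (hg : AEMeasurable g ((ν.map (dist o)).restrict (Ioo 0 R))) :
    ∫⁻ z in ball o R, g (dist o z) ∂ν = ∫⁻ r in Ioo 0 R, g r ∂(ν.map (dist o)) := by
  have hpre : dist o ⁻¹' Ioo 0 R = ball o R \ {o} := by
    ext z
    simp [dist_comm o z, and_comm, dist_pos]
  rw [Measure.restrict_map (by fun_prop) measurableSet_Ioo] at hg ⊢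
  rw [lintegral_map' hg (by fun_prop), hpre, Measure.restrict_congr_set (sdiff_null_ae_eq_self hpt)]

theorem setLIntegral_ball_eq_setLIntegral_rnDeriv_mul {ν : Measure X} {o : X} (hpt : ν {o} = 0)
    (hν : ∀ r, ν (closedBall o r) ≠ ∞) (hac : (ν.map (dist o)).restrict (Ioi 0) ≪ volume)
    {g : ℝ → ℝ≥0∞} (hg : ContinuousOn g (Ioi 0)) (R : ℝ) :
    ∫⁻ z in ball o R, g (dist o z) ∂ν
      = ∫⁻ r in Ioo 0 R, (radialStieltjes ν o hν).measure.rnDeriv volume r * g r := by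
  rw [setLIntegral_ball_eq_setLIntegral_map_dist hpt
      ((hg.mono Ioo_subset_Ioi_self).aemeasurable measurableSet_Ioo),
    ← radialStieltjes_measure ν o hν]
  refine setLIntegral_eq_setLIntegral_rnDeriv_mul measurableSet_Ioo ?_ g
  rw [radialStieltjes_measure]
  exact (Measure.absolutelyContinuous_of_le
    (Measure.restrict_mono Ioo_subset_Ioi_self le_rfl)).trans hac

end MetricSpace

theorem stmt_6_general {X : Type*} [MetricSpace X] [MeasurableSpace X] [BorelSpace X]
    (μ : Measure X) (o : X)
    (hfin : ∀ r : ℝ, 0 < r → μ (ball o r) < ⊤)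
    (hLip : ∀ a : ℝ, 0 < a → ∃ (K : NNReal) (t : Set ℝ), t ∈ nhdsWithin a (Ioi 0) ∧
      LipschitzOnWith K (fun r : ℝ => (μ (ball o r)).toReal) t)
    (hpt : μ {o} = 0)
    (φ : ℝ → ℝ) (hφc : ContinuousOn φ (Ioi 0))
    (f : X → ℝ) (hf : Measurable f) (hf0 : ∀ z, 0 ≤ f z)
    (hbd : ∀ s : Set X, Bornology.IsBounded s → ∃ C : ℝ, ∀ z ∈ s, |f z| ≤ C) :
    ∀ R : ℝ, 0 < R →
      ∫⁻ z in ball o R, ENNReal.ofReal (φ (dist o z) * f z) ∂μ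
        = ∫⁻ r in Ioo (0:ℝ) R, ENNReal.ofReal (φ r * bdryIntegral μ f o r) := by
  intro R _
  have hLip' : LocallyLipschitzOn (Ioi 0) (fun r => μ.real (ball o r)) := hLip
  have hμball : ∀ r, μ (ball o r) ≠ ∞ := fun r => by
    rcases le_or_gt r 0 with h | h
    · simp [ball_eq_empty.2 h]
    · exact (hfin r h).ne
  have hμcb : ∀ r, μ (closedBall o r) ≠ ∞ := fun r =>
    ne_top_of_le_ne_top (hμball (r + 1)) (measure_mono (closedBall_subset_ball (lt_add_one r)))
  have hsph := measure_sphere_eq_zero hμball hLip'.continuousOn hpt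
  set ν := μ.withDensity fun z => ENNReal.ofReal (f z)
  have hνμ : ν ≪ μ := withDensity_absolutelyContinuous μ _
  have hνcb : ∀ r, ν (closedBall o r) ≠ ∞ := fun r =>
    withDensity_ofReal_ne_top measurableSet_closedBall (hμcb r) (hbd _ isBounded_closedBall)
  have hac : (ν.map (dist o)).restrict (Ioi 0) ≪ volume :=
    ((hνμ.map (by fun_prop)).restrict _).trans
      (map_dist_restrict_Ioi_absolutelyContinuous hμcb hsph hLip')
  rw [setLIntegral_ofReal_mul_eq_withDensity hf hf0 _ measurableSet_ball,
    setLIntegral_ball_eq_setLIntegral_rnDeriv_mul (hνμ hpt) hνcb hac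
      (g := fun r => ENNReal.ofReal (φ r)) (ENNReal.continuous_ofReal.comp_continuousOn hφc)]
  refine lintegral_congr_ae (ae_restrict_of_ae ?_)
  filter_upwards [(radialStieltjes ν o hνcb).ae_hasDerivAt,
    (radialStieltjes ν o hνcb).measure.rnDeriv_lt_top volume] with r hderiv hlt
  rw [bdryIntegral_eq_of_hasDerivAt hf hf0 hsph hνcb hderiv,
    ENNReal.ofReal_mul' ENNReal.toReal_nonneg, ENNReal.ofReal_toReal hlt.ne, mul_comm]

theorem stmt_6 {X : Type*} [MetricSpace X] [MeasurableSpace X] [BorelSpace X]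
    (μ : Measure X) (o : X)
    (hfin : ∀ r : ℝ, 0 < r → μ (ball o r) < ⊤)
    (hLip : ∀ a : ℝ, 0 < a → ∃ (K : NNReal) (t : Set ℝ), t ∈ nhdsWithin a (Ioi 0) ∧
      LipschitzOnWith K (fun r : ℝ => (μ (ball o r)).toReal) t)
    (hpt : μ {o} = 0)
    (φ : ℝ → ℝ) (hφc : ContinuousOn φ (Ioi 0)) (hφ0 : ∀ r : ℝ, 0 < r → 0 ≤ φ r)
    (hφmono : MonotoneOn φ (Ioi 0) ∨ AntitoneOn φ (Ioi 0))
    (f : X → ℝ) (hf : Measurable f) (hf0 : ∀ z, 0 ≤ f z)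
    (hbd : ∀ s : Set X, Bornology.IsBounded s → ∃ C : ℝ, ∀ z ∈ s, |f z| ≤ C) :
    ∀ R : ℝ, 0 < R →
      ∫⁻ z in ball o R, ENNReal.ofReal (φ (dist o z) * f z) ∂μ
        = ∫⁻ r in Ioo (0:ℝ) R, ENNReal.ofReal (φ r * bdryIntegral μ f o r) :=
  stmt_6_general μ o hfin hLip hpt φ hφc f hf hf0 hbd
end

section
/- Let (X,d) be a metric space, μ a Borel measure on X, and o ∈ X. Assume that μ(B(o,r)) < ∞ for every r > 0, that the function r ↦ μ(B(o,r)) is locally Lipschitz continuous on (0,∞), and that μ({o}) = 0. Let φ : (0,∞) → [0,∞) be continuous and monotone (non-increasing or non-decreasing), and let f : X → [0,∞) be μ-measurable and bounded on bounded subsets of X. Then for every R > 0, ∫_{X∖B(o,R)} φ(d(o,z)) f(z) dμ(z) = ∫_R^∞ φ(r) |f|_{∂B(o,r)} dr, as an equality of values in [0,∞]. -/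
/-!
Push `f μ` forward along `z ↦ d(o,z)` to a measure `ν` on `ℝ`, so that the left side is
`∫_{[R,∞)} φ dν`. Where `r ↦ μ(B(o,r))` is `K`-Lipschitz and `|f| ≤ C`, the annulus
`B(o,b) ∖ B(o,a)` carries `f μ`-mass at most `CK(b-a)`; by the Besicovitch covering theorem this
makes `ν` absolutely continuous on `(0,∞)`. By Lebesgue differentiation its density at almost
every `r` is the one-sided limit of `ν[r,r+δ)/δ`, which is exactly `|f|_{∂B(o,r)}`, and the
formula becomes `∫ φ dν = ∫ φ (dν/dr) dr`.
-/

open MeasureTheory Metric Filter Set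

open scoped ENNReal NNReal Topology

section Besicovitch

variable {β : Type*} [MetricSpace β] [MeasurableSpace β] [BorelSpace β] [SecondCountableTopology β]
  [HasBesicovitchCovering β]

theorem MeasureTheory.Measure.restrict_absolutelyContinuous_of_frequently_closedBall_le
    {ρ μ : Measure β} [SFinite ρ] [IsLocallyFiniteMeasure μ] {s : Set β}
    (h : ∀ x ∈ s, ∃ C : ℝ≥0, ∃ᶠ r in 𝓝[>] 0, ρ (closedBall x r) ≤ C * μ (closedBall x r)) :
    ρ.restrict s ≪ μ := by
  refine Measure.AbsolutelyContinuous.mk fun t ht hμt => ?_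
  rw [Measure.restrict_apply ht]
  let S : ℕ → Set β := fun n =>
    {x | x ∈ t ∩ s ∧ ∃ᶠ r in 𝓝[>] 0, ρ (closedBall x r) ≤ (n : ℝ≥0) * μ (closedBall x r)}
  have hcover : t ∩ s ⊆ ⋃ n, S n := by
    intro x hx
    obtain ⟨C, hC⟩ := h x hx.2
    obtain ⟨n, hn⟩ := exists_nat_ge C
    refine mem_iUnion.2 ⟨n, hx, hC.mono fun r hr => hr.trans ?_⟩
    gcongr
  refine measure_mono_null hcover (measure_iUnion_null fun n => le_antisymm ?_ bot_le)
  calc ρ (S n) ≤ ((n : ℝ≥0) • μ) (S n) :=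
        (Besicovitch.vitaliFamily ρ).measure_le_of_frequently_le _ Measure.AbsolutelyContinuous.rfl
          _ fun x hx => (Besicovitch.tendsto_filterAt ρ x).frequently hx.2
    _ ≤ ((n : ℝ≥0) • μ) t := measure_mono fun x hx => hx.1.1
    _ = 0 := by simp [hμt]

end Besicovitch

theorem ae_tendsto_measure_Ico_div (ν : Measure ℝ) [IsLocallyFiniteMeasure ν] (hν : ν ≪ volume) :
    ∀ᵐ x, Tendsto (fun δ => (ν (Ico x (x + δ))).toReal / δ) (𝓝[>] 0)
      (𝓝 (ν.rnDeriv volume x).toReal) := by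
  have : NullSingletonClass ν := ⟨fun x => hν (measure_singleton x)⟩
  filter_upwards
    [VitaliFamily.ae_tendsto_rnDeriv (IsUnifLocDoublingMeasure.vitaliFamily volume 1) ν,
      ν.rnDeriv_lt_top volume] with x hx hx_lt_top
  have hshift : Tendsto (fun δ => x + δ) (𝓝[>] 0) (𝓝[>] x) := by
    refine tendsto_nhdsWithin_iff.2 ⟨?_, ?_⟩
    · simpa using ((continuous_const_add x).tendsto 0).mono_left nhdsWithin_le_nhds
    · filter_upwards [self_mem_nhdsWithin] with δ hδ using lt_add_of_pos_right x hδ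
  refine ((ENNReal.tendsto_toReal hx_lt_top.ne).comp
    (hx.comp ((Real.tendsto_Icc_vitaliFamily_right x).comp hshift))).congr' ?_
  filter_upwards [self_mem_nhdsWithin] with δ (hδ : 0 < δ)
  simp [measure_congr Ico_ae_eq_Icc, Real.volume_Icc, ENNReal.toReal_div, hδ.le]

lemma setLIntegral_ofReal_le_mul {X : Type*} [MeasurableSpace X] {μ : Measure X} {f : X → ℝ}
    {s : Set X} (hs : MeasurableSet s) {C : ℝ} (hC : ∀ z ∈ s, |f z| ≤ C) :
    ∫⁻ z in s, ENNReal.ofReal (f z) ∂μ ≤ ENNReal.ofReal C * μ s :=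
  (setLIntegral_mono' hs fun z hz => ENNReal.ofReal_le_ofReal
    ((le_abs_self _).trans (hC z hz))).trans_eq (setLIntegral_const s _)

section Radial

variable {X : Type*} [MetricSpace X]

lemma preimage_dist_Iio (o : X) (b : ℝ) : dist o ⁻¹' Iio b = ball o b := by
  ext z; simp [dist_comm]

lemma preimage_dist_Ici (o : X) (b : ℝ) : dist o ⁻¹' Ici b = (ball o b)ᶜ := by
  ext z; simp [dist_comm]

lemma preimage_dist_Ico (o : X) (a b : ℝ) : dist o ⁻¹' Ico a b = ball o b \ ball o a := by
  ext z; simp [dist_comm, and_comm]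

variable [MeasurableSpace X] (μ : Measure X) (o : X)

lemma measure_ball_lt_top_of_forall_pos (hfin : ∀ r : ℝ, 0 < r → μ (ball o r) < ⊤) (r : ℝ) :
    μ (ball o r) < ⊤ :=
  (measure_mono (ball_subset_ball (le_max_left r 1))).trans_lt (hfin _ (by positivity))

variable [BorelSpace X]

lemma measurable_dist_left : Measurable (dist o) :=
  (continuous_const.dist continuous_id).measurable

lemma measure_ball_diff_ball {a b : ℝ} (hab : a ≤ b) (hb : μ (ball o b) ≠ ⊤) :
    μ (ball o b \ ball o a) = ENNReal.ofReal ((μ (ball o b)).toReal - (μ (ball o a)).toReal) := by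
  have hsub := ball_subset_ball (x := o) hab
  rw [measure_sdiff hsub measurableSet_ball.nullMeasurableSet (ne_top_of_le_ne_top hb
    (measure_mono hsub)), ← ENNReal.toReal_sub_of_le (measure_mono hsub) hb,
    ENNReal.ofReal_toReal (ne_top_of_le_ne_top hb tsub_le_self)]

variable (f : X → ℝ)

noncomputable def radialMeasure : Measure ℝ :=
  (μ.withDensity fun z => ENNReal.ofReal (f z)).map (dist o)

lemma radialMeasure_apply {s : Set ℝ} (hs : MeasurableSet s) :
    radialMeasure μ o f s = ∫⁻ z in dist o ⁻¹' s, ENNReal.ofReal (f z) ∂μ := by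
  rw [radialMeasure, Measure.map_apply (measurable_dist_left o) hs,
    withDensity_apply _ (measurable_dist_left o hs)]

lemma setLIntegral_radialMeasure (hf : Measurable f) {g : ℝ → ℝ≥0∞} (hg : Measurable g)
    {s : Set ℝ} (hs : MeasurableSet s) :
    ∫⁻ r in s, g r ∂radialMeasure μ o f
      = ∫⁻ z in dist o ⁻¹' s, g (dist o z) * ENNReal.ofReal (f z) ∂μ := by
  rw [radialMeasure, setLIntegral_map hs hg (measurable_dist_left o)]
  exact (setLIntegral_withDensity_eq_setLIntegral_mul _ hf.ennreal_ofReal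
    (hg.comp (measurable_dist_left o)) (measurable_dist_left o hs)).trans (by simp [mul_comm])

lemma integral_ball_diff_ball (hf : Measurable f) (hf0 : ∀ z, 0 ≤ f z) (a b : ℝ) :
    ∫ z in ball o b \ ball o a, f z ∂μ = (radialMeasure μ o f (Ico a b)).toReal := by
  rw [radialMeasure_apply _ _ _ measurableSet_Ico, preimage_dist_Ico,
    integral_eq_lintegral_of_nonneg_ae (ae_of_all _ hf0) hf.aestronglyMeasurable]

variable {μ o f}

lemma isLocallyFiniteMeasure_radialMeasure (hfin : ∀ r : ℝ, 0 < r → μ (ball o r) < ⊤)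
    (hbd : ∀ s : Set X, Bornology.IsBounded s → ∃ C : ℝ, ∀ z ∈ s, |f z| ≤ C) :
    IsLocallyFiniteMeasure (radialMeasure μ o f) := by
  refine ⟨fun x => ⟨Iio (x + 1), Iio_mem_nhds (lt_add_one x), ?_⟩⟩
  obtain ⟨C, hC⟩ := hbd _ (isBounded_ball (x := o) (r := x + 1))
  rw [radialMeasure_apply _ _ _ measurableSet_Iio, preimage_dist_Iio]
  exact (setLIntegral_ofReal_le_mul measurableSet_ball hC).trans_lt
    (ENNReal.mul_lt_top ENNReal.ofReal_lt_top (measure_ball_lt_top_of_forall_pos μ o hfin _))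

lemma radialMeasure_Ico_le (hfin : ∀ r : ℝ, 0 < r → μ (ball o r) < ⊤) {a b C : ℝ} (hab : a ≤ b)
    (hC : ∀ z ∈ ball o b, |f z| ≤ C) :
    radialMeasure μ o f (Ico a b)
      ≤ ENNReal.ofReal C * ENNReal.ofReal ((μ (ball o b)).toReal - (μ (ball o a)).toReal) := by
  rw [radialMeasure_apply _ _ _ measurableSet_Ico, preimage_dist_Ico,
    ← measure_ball_diff_ball μ o hab (measure_ball_lt_top_of_forall_pos μ o hfin b).ne]
  exact setLIntegral_ofReal_le_mul (measurableSet_ball.diff measurableSet_ball)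
    fun z hz => hC z hz.1

lemma eventually_radialMeasure_closedBall_le (hfin : ∀ r : ℝ, 0 < r → μ (ball o r) < ⊤)
    (hbd : ∀ s : Set X, Bornology.IsBounded s → ∃ C : ℝ, ∀ z ∈ s, |f z| ≤ C)
    {x : ℝ} {K : ℝ≥0} {t : Set ℝ} (ht : t ∈ 𝓝 x)
    (hK : LipschitzOnWith K (fun r : ℝ => (μ (ball o r)).toReal) t) :
    ∃ C : ℝ≥0, ∀ᶠ r in 𝓝[>] 0,
      radialMeasure μ o f (closedBall x r) ≤ C * volume (closedBall x r) := by
  obtain ⟨ε, hε, hεt⟩ := Metric.mem_nhds_iff.1 ht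
  obtain ⟨C, hC⟩ := hbd _ (isBounded_ball (x := o) (r := x + ε))
  refine ⟨2 * C.toNNReal * K, ?_⟩
  filter_upwards [Ioo_mem_nhdsGT (show (0 : ℝ) < ε / 3 by positivity)] with r ⟨hr0, hrε⟩
  have hmem : ∀ y, |y - x| < ε → y ∈ t := fun y hy => hεt (by rwa [mem_ball, Real.dist_eq])
  -- a half-open interval pulls back to an annulus
  have hsub : closedBall x r ⊆ Ico (x - r) (x + 2 * r) := by
    rw [Real.closedBall_eq_Icc]; exact Icc_subset_Ico_right (by linarith)
  have hlip : (μ (ball o (x + 2 * r))).toReal - (μ (ball o (x - r))).toReal ≤ K * (3 * r) := by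
    have := hK.dist_le_mul (x + 2 * r) (hmem _ (by rw [abs_lt]; constructor <;> linarith))
      (x - r) (hmem _ (by rw [abs_lt]; constructor <;> linarith))
    rw [Real.dist_eq, Real.dist_eq, show x + 2 * r - (x - r) = 3 * r by ring,
      abs_of_pos (by linarith : (0 : ℝ) < 3 * r)] at this
    exact (le_abs_self _).trans this
  calc radialMeasure μ o f (closedBall x r)
      ≤ radialMeasure μ o f (Ico (x - r) (x + 2 * r)) := measure_mono hsub
    _ ≤ ENNReal.ofReal C * ENNReal.ofReal
          ((μ (ball o (x + 2 * r))).toReal - (μ (ball o (x - r))).toReal) :=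
        radialMeasure_Ico_le hfin (by linarith)
          fun z hz => hC z (ball_subset_ball (by linarith) hz)
    _ ≤ C.toNNReal * ENNReal.ofReal (2 * K * (2 * r)) := by
        gcongr
        · exact le_rfl
        · nlinarith [K.coe_nonneg]
    _ = ↑(2 * C.toNNReal * K) * volume (closedBall x r) := by
        rw [Real.volume_closedBall, ENNReal.ofReal_mul (by positivity),
          ENNReal.ofReal_mul zero_le_two, ENNReal.ofReal_ofNat, ENNReal.ofReal_coe_nnreal]
        push_cast
        ring

lemma radialMeasure_restrict_absolutelyContinuous (hfin : ∀ r : ℝ, 0 < r → μ (ball o r) < ⊤)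
    (hLip : ∀ a : ℝ, 0 < a → ∃ (K : NNReal) (t : Set ℝ), t ∈ nhdsWithin a (Ioi 0) ∧
      LipschitzOnWith K (fun r : ℝ => (μ (ball o r)).toReal) t)
    (hbd : ∀ s : Set X, Bornology.IsBounded s → ∃ C : ℝ, ∀ z ∈ s, |f z| ≤ C) :
    (radialMeasure μ o f).restrict (Ioi 0) ≪ volume := by
  have := isLocallyFiniteMeasure_radialMeasure hfin hbd
  refine Measure.restrict_absolutelyContinuous_of_frequently_closedBall_le fun x hx => ?_
  obtain ⟨K, t, ht, hK⟩ := hLip x hx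
  rw [nhdsWithin_eq_nhds.2 (Ioi_mem_nhds hx)] at ht
  obtain ⟨C, hC⟩ := eventually_radialMeasure_closedBall_le hfin hbd ht hK
  exact ⟨C, hC.frequently⟩

lemma ae_bdryIntegral_eq_rnDeriv (hf : Measurable f) (hf0 : ∀ z, 0 ≤ f z)
    (hfin : ∀ r : ℝ, 0 < r → μ (ball o r) < ⊤)
    (hLip : ∀ a : ℝ, 0 < a → ∃ (K : NNReal) (t : Set ℝ), t ∈ nhdsWithin a (Ioi 0) ∧
      LipschitzOnWith K (fun r : ℝ => (μ (ball o r)).toReal) t)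
    (hbd : ∀ s : Set X, Bornology.IsBounded s → ∃ C : ℝ, ∀ z ∈ s, |f z| ≤ C) :
    ∀ᵐ r, 0 < r → bdryIntegral μ f o r
      = (((radialMeasure μ o f).restrict (Ioi 0)).rnDeriv volume r).toReal := by
  have := isLocallyFiniteMeasure_radialMeasure hfin hbd
  filter_upwards [ae_tendsto_measure_Ico_div _
    (radialMeasure_restrict_absolutelyContinuous hfin hLip hbd)] with r hr hr0
  refine (hr.congr' ?_).limsup_eq
  filter_upwards [self_mem_nhdsWithin] with δ (hδ : 0 < δ)
  rw [Measure.restrict_apply measurableSet_Ico,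
    inter_eq_left.2 (Ico_subset_Ici_self.trans (Ici_subset_Ioi.2 hr0)),
    integral_ball_diff_ball μ o f hf hf0]

theorem setLIntegral_compl_ball_eq (hf : Measurable f) (hf0 : ∀ z, 0 ≤ f z)
    (hfin : ∀ r : ℝ, 0 < r → μ (ball o r) < ⊤)
    (hLip : ∀ a : ℝ, 0 < a → ∃ (K : NNReal) (t : Set ℝ), t ∈ nhdsWithin a (Ioi 0) ∧
      LipschitzOnWith K (fun r : ℝ => (μ (ball o r)).toReal) t)
    (hbd : ∀ s : Set X, Bornology.IsBounded s → ∃ C : ℝ, ∀ z ∈ s, |f z| ≤ C)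
    {g : ℝ → ℝ≥0∞} (hg : Measurable g) {R : ℝ} (hR : 0 < R) :
    ∫⁻ z in (ball o R)ᶜ, g (dist o z) * ENNReal.ofReal (f z) ∂μ
      = ∫⁻ r in Ioi R, g r * ENNReal.ofReal (bdryIntegral μ f o r) := by
  have := isLocallyFiniteMeasure_radialMeasure hfin hbd
  set ν := (radialMeasure μ o f).restrict (Ioi 0)
  have hν : ν ≪ volume := radialMeasure_restrict_absolutelyContinuous hfin hLip hbd
  have hR_null : radialMeasure μ o f {R} = 0 := by
    rw [← inter_eq_left.2 (singleton_subset_iff.2 (mem_Ioi.2 hR)),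
      ← Measure.restrict_apply (measurableSet_singleton R)]
    exact hν Real.volume_singleton
  calc ∫⁻ z in (ball o R)ᶜ, g (dist o z) * ENNReal.ofReal (f z) ∂μ
      = ∫⁻ r in Ioi R, g r ∂ν := by
        rw [← preimage_dist_Ici, ← setLIntegral_radialMeasure μ o f hf hg measurableSet_Ici,
          Measure.restrict_congr_set (Ioi_ae_eq_Ici' hR_null).symm,
          Measure.restrict_restrict_of_subset (Ioi_subset_Ioi hR.le)]
    _ = ∫⁻ r in Ioi R, ν.rnDeriv volume r * g r :=
        (setLIntegral_rnDeriv_mul hν hg.aemeasurable measurableSet_Ioi).symm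
    _ = ∫⁻ r in Ioi R, g r * ENNReal.ofReal (bdryIntegral μ f o r) := by
        refine setLIntegral_congr_fun_ae measurableSet_Ioi ?_
        filter_upwards [ae_bdryIntegral_eq_rnDeriv hf hf0 hfin hLip hbd,
          ν.rnDeriv_lt_top volume] with r hr hr_lt_top hrR
        rw [hr (hR.trans hrR), ENNReal.ofReal_toReal hr_lt_top.ne, mul_comm]

end Radial

theorem stmt_7_general {X : Type*} [MetricSpace X] [MeasurableSpace X] [BorelSpace X]
    (μ : Measure X) (o : X)
    (hfin : ∀ r : ℝ, 0 < r → μ (ball o r) < ⊤)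
    (hLip : ∀ a : ℝ, 0 < a → ∃ (K : NNReal) (t : Set ℝ), t ∈ nhdsWithin a (Ioi 0) ∧
      LipschitzOnWith K (fun r : ℝ => (μ (ball o r)).toReal) t)
    (φ : ℝ → ℝ) (hφc : ContinuousOn φ (Ioi 0)) (hφ0 : ∀ r : ℝ, 0 < r → 0 ≤ φ r)
    (f : X → ℝ) (hf : Measurable f) (hf0 : ∀ z, 0 ≤ f z)
    (hbd : ∀ s : Set X, Bornology.IsBounded s → ∃ C : ℝ, ∀ z ∈ s, |f z| ≤ C) :
    ∀ R : ℝ, 0 < R →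
      ∫⁻ z in (ball o R)ᶜ, ENNReal.ofReal (φ (dist o z) * f z) ∂μ
        = ∫⁻ r in Ioi R, ENNReal.ofReal (φ r * bdryIntegral μ f o r) := by
  classical
  intro R hR
  set ψ := (Ioi (0 : ℝ)).piecewise φ 0
  have hψ : Measurable ψ := hφc.measurable_piecewise continuousOn_const measurableSet_Ioi
  have hψφ : ∀ r, 0 < r → ψ r = φ r := fun r hr => piecewise_eq_of_mem _ _ _ hr
  calc ∫⁻ z in (ball o R)ᶜ, ENNReal.ofReal (φ (dist o z) * f z) ∂μ
      = ∫⁻ z in (ball o R)ᶜ, ENNReal.ofReal (ψ (dist o z)) * ENNReal.ofReal (f z) ∂μ := by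
        refine setLIntegral_congr_fun measurableSet_ball.compl fun z hz => ?_
        have hz0 : 0 < dist o z := hR.trans_le (by simpa [dist_comm] using hz)
        rw [hψφ _ hz0, ENNReal.ofReal_mul (hφ0 _ hz0)]
    _ = ∫⁻ r in Ioi R, ENNReal.ofReal (ψ r) * ENNReal.ofReal (bdryIntegral μ f o r) :=
        setLIntegral_compl_ball_eq hf hf0 hfin hLip hbd hψ.ennreal_ofReal hR
    _ = ∫⁻ r in Ioi R, ENNReal.ofReal (φ r * bdryIntegral μ f o r) := by
        refine setLIntegral_congr_fun measurableSet_Ioi fun r hr => ?_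
        rw [hψφ _ (hR.trans hr), ENNReal.ofReal_mul (hφ0 _ (hR.trans hr))]

theorem stmt_7 {X : Type*} [MetricSpace X] [MeasurableSpace X] [BorelSpace X]
    (μ : Measure X) (o : X)
    (hfin : ∀ r : ℝ, 0 < r → μ (ball o r) < ⊤)
    (hLip : ∀ a : ℝ, 0 < a → ∃ (K : NNReal) (t : Set ℝ), t ∈ nhdsWithin a (Ioi 0) ∧
      LipschitzOnWith K (fun r : ℝ => (μ (ball o r)).toReal) t)
    (hpt : μ {o} = 0)
    (φ : ℝ → ℝ) (hφc : ContinuousOn φ (Ioi 0)) (hφ0 : ∀ r : ℝ, 0 < r → 0 ≤ φ r)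
    (hφmono : MonotoneOn φ (Ioi 0) ∨ AntitoneOn φ (Ioi 0))
    (f : X → ℝ) (hf : Measurable f) (hf0 : ∀ z, 0 ≤ f z)
    (hbd : ∀ s : Set X, Bornology.IsBounded s → ∃ C : ℝ, ∀ z ∈ s, |f z| ≤ C) :
    ∀ R : ℝ, 0 < R →
      ∫⁻ z in (ball o R)ᶜ, ENNReal.ofReal (φ (dist o z) * f z) ∂μ
        = ∫⁻ r in Ioi R, ENNReal.ofReal (φ r * bdryIntegral μ f o r) :=
  stmt_7_general μ o hfin hLip φ hφc hφ0 f hf hf0 hbd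
end
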